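/- arXiv:1709.02337 — 2 statements merged into one kernel-verified Lean document; each statement's English description precedes it below -/
import Mathlib

section
/- Let H be a real Hilbert space, V an open neighborhood of a point u₀, and L ∈ C¹(V, ℝ) whose gradient ∇L has a Gâteaux derivative B(u) ∈ L_s(H) at each u ∈ V, with decomposition B = P + Q where: (a) there are ε > 0 and C₀ > 0 with (P(u)v, v) ≥ C₀‖v‖² for all v ∈ H and u ∈ B(u₀, ε); (b) Q : V → L(H) is continuous at u₀ with Q(u₀) compact. If (uₙ) ⊂ B(u₀, ε') for sufficiently small ε' ≤ ε satisfies ∇L(uₙ) → 0 and ‖Q(u) − Q(u₀)‖ < C₀/2 for all u ∈ B(u₀, ε'), then (uₙ) has a strongly convergent subsequence. -/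
/-!
Along the segment from `x` to `y`, the mean value theorem gives
`⟪∇L y - ∇L x, y - x⟫ = ⟪B(ξ)(y - x), y - x⟫` for some `ξ`. Splitting
`B(ξ) = P(ξ) + (Q(ξ) - Q(u₀)) + Q(u₀)`, coercivity of `P` and `‖Q(ξ) - Q(u₀)‖ ≤ C₀/2` give
`C₀/2 ‖y - x‖ ≤ ‖∇L y‖ + ‖∇L x‖ + ‖Q(u₀) y - Q(u₀) x‖`. Since `Q(u₀)` is compact, it maps the
bounded sequence `(uₙ)` to a sequence with a convergent subsequence; along it the right-hand
side tends to zero, so that subsequence of `(uₙ)` is Cauchy.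
-/

open Filter Topology

local notation "⟪" x ", " y "⟫" => @inner ℝ _ _ x y

section InnerProductSpace

variable {E : Type*} [NormedAddCommGroup E] [InnerProductSpace ℝ E]

theorem mul_norm_le_norm_of_mul_norm_sq_le_inner {c : ℝ} {a v : E}
    (h : c * ‖v‖ ^ 2 ≤ ⟪a, v⟫) : c * ‖v‖ ≤ ‖a‖ := by
  rcases eq_or_ne v 0 with rfl | hv
  · simp
  have hv : 0 < ‖v‖ := norm_pos_iff.2 hv
  refine le_of_mul_le_mul_right ?_ hv
  calc c * ‖v‖ * ‖v‖ = c * ‖v‖ ^ 2 := by ring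
    _ ≤ ⟪a, v⟫ := h
    _ ≤ ‖a‖ * ‖v‖ := real_inner_le_norm a v

theorem half_mul_norm_sq_le_inner_add_sub {P Q K : E →L[ℝ] E} {C : ℝ} {v : E}
    (hP : C * ‖v‖ ^ 2 ≤ ⟪P v, v⟫) (hQ : ‖Q - K‖ ≤ C / 2) :
    C / 2 * ‖v‖ ^ 2 ≤ ⟪(P + Q) v - K v, v⟫ := by
  have hsplit : ⟪(P + Q) v - K v, v⟫ = ⟪P v, v⟫ + ⟪(Q - K) v, v⟫ := by
    simp only [add_apply, sub_apply, add_sub_assoc, inner_add_left]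
  have hQK : -⟪(Q - K) v, v⟫ ≤ C / 2 * ‖v‖ ^ 2 :=
    calc -⟪(Q - K) v, v⟫ ≤ ‖(Q - K) v‖ * ‖v‖ := (neg_le_abs _).trans (abs_real_inner_le_norm _ _)
      _ ≤ ‖Q - K‖ * ‖v‖ * ‖v‖ := by gcongr; exact (Q - K).le_opNorm v
      _ ≤ C / 2 * ‖v‖ * ‖v‖ := by gcongr
      _ = C / 2 * ‖v‖ ^ 2 := by ring
  linarith

theorem hasDerivAt_comp_add_smul_of_tendsto {F : Type*} [NormedAddCommGroup F] [NormedSpace ℝ F]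
    {G : E → F} {x v : E} {s : ℝ} {b : F}
    (h : Tendsto (fun t : ℝ => t⁻¹ • (G (x + s • v + t • v) - G (x + s • v)))
      (𝓝[≠] 0) (𝓝 b)) :
    HasDerivAt (fun s : ℝ => G (x + s • v)) b s := by
  rw [hasDerivAt_iff_tendsto_slope_zero]
  convert h using 2 with t
  rw [add_smul, add_assoc]

variable {S : Set E} {G : E → E} {B : E → E →L[ℝ] E}

theorem Convex.exists_inner_sub_eq_inner_gateaux (hS : Convex ℝ S)
    (hG : ∀ u ∈ S, ∀ v : E,
      Tendsto (fun t : ℝ => t⁻¹ • (G (u + t • v) - G u)) (𝓝[≠] 0) (𝓝 (B u v)))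
    {x y : E} (hx : x ∈ S) (hy : y ∈ S) :
    ∃ ξ ∈ S, ⟪G y - G x, y - x⟫ = ⟪B ξ (y - x), y - x⟫ := by
  have hpath : ∀ s ∈ Set.Icc (0 : ℝ) 1, x + s • (y - x) ∈ S := fun s hs =>
    hS.add_smul_sub_mem hx hy hs
  have hderiv : ∀ s ∈ Set.Icc (0 : ℝ) 1, HasDerivAt (fun s : ℝ => ⟪G (x + s • (y - x)), y - x⟫)
      ⟪B (x + s • (y - x)) (y - x), y - x⟫ s := fun s hs => by
    simpa using (hasDerivAt_comp_add_smul_of_tendsto (hG _ (hpath s hs) (y - x))).inner ℝ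
      (hasDerivAt_const s (y - x))
  obtain ⟨c, hc, hslope⟩ := exists_hasDerivAt_eq_slope _ _ one_pos
    (fun s hs => (hderiv s hs).continuousAt.continuousWithinAt)
    (fun s hs => hderiv s (Set.mem_Icc_of_Ioo hs))
  refine ⟨_, hpath c (Set.mem_Icc_of_Ioo hc), ?_⟩
  rw [hslope, inner_sub_left]
  simp

theorem Convex.half_mul_norm_sub_le {P Q : E → E →L[ℝ] E} {K : E →L[ℝ] E} {C : ℝ}
    (hS : Convex ℝ S)
    (hG : ∀ u ∈ S, ∀ v : E,
      Tendsto (fun t : ℝ => t⁻¹ • (G (u + t • v) - G u)) (𝓝[≠] 0) (𝓝 (B u v)))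
    (hdec : ∀ u ∈ S, B u = P u + Q u) (hP : ∀ u ∈ S, ∀ v : E, C * ‖v‖ ^ 2 ≤ ⟪P u v, v⟫)
    (hQ : ∀ u ∈ S, ‖Q u - K‖ ≤ C / 2) {x y : E} (hx : x ∈ S) (hy : y ∈ S) :
    C / 2 * ‖y - x‖ ≤ ‖G y - G x - K (y - x)‖ := by
  obtain ⟨ξ, hξ, hmvt⟩ := hS.exists_inner_sub_eq_inner_gateaux hG hx hy
  refine mul_norm_le_norm_of_mul_norm_sq_le_inner ?_
  rw [inner_sub_left, hmvt, ← inner_sub_left, hdec ξ hξ]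
  exact half_mul_norm_sq_le_inner_add_sub (hP ξ hξ _) (hQ ξ hξ)

end InnerProductSpace

theorem cauchySeq_of_mul_norm_sub_le {E F W : Type*} [SeminormedAddCommGroup E]
    [SeminormedAddCommGroup F] [SeminormedAddCommGroup W] {u : ℕ → E} {k : ℕ → F} {g : ℕ → W}
    {c : ℝ} (hc : 0 < c) (hk : CauchySeq k) (hg : Tendsto g atTop (𝓝 0))
    (hle : ∀ m n, c * ‖u m - u n‖ ≤ ‖g m‖ + ‖g n‖ + ‖k m - k n‖) : CauchySeq u := by
  rw [cauchySeq_iff_tendsto_dist_atTop_0, ← prod_atTop_atTop_eq] at hk ⊢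
  have hg' : Tendsto (fun n => ‖g n‖) atTop (𝓝 0) := by simpa using hg.norm
  have hbound : Tendsto (fun p : ℕ × ℕ => (‖g p.1‖ + ‖g p.2‖ + dist (k p.1) (k p.2)) / c)
      (atTop ×ˢ atTop) (𝓝 0) := by
    simpa using (((hg'.comp tendsto_fst).add (hg'.comp tendsto_snd)).add hk).div_const c
  refine squeeze_zero (fun _ => dist_nonneg) (fun p => ?_) hbound
  rw [le_div_iff₀ hc, dist_eq_norm, dist_eq_norm, mul_comm]
  exact hle p.1 p.2

theorem IsCompactOperator.exists_tendsto_subseq_comp {E F : Type*} [NormedAddCommGroup E]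
    [NormedSpace ℝ E] [NormedAddCommGroup F] [NormedSpace ℝ F] {K : E →L[ℝ] F}
    (hK : IsCompactOperator K) {u : ℕ → E} (hu : Bornology.IsBounded (Set.range u)) :
    ∃ φ : ℕ → ℕ, StrictMono φ ∧ ∃ w : F, Tendsto (K ∘ u ∘ φ) atTop (𝓝 w) := by
  obtain ⟨T, hT, hKT⟩ :=
    IsCompactOperator.image_subset_compact_of_bounded (f := (K : E →ₗ[ℝ] F)) hK hu
  obtain ⟨w, -, φ, hφ, hlim⟩ := hT.tendsto_subseq (x := K ∘ u) fun n => hKT ⟨u n, ⟨n, rfl⟩, rfl⟩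
  exact ⟨φ, hφ, w, hlim⟩

theorem exists_tendsto_subseq_of_mul_norm_sub_le {E F W : Type*} [NormedAddCommGroup E]
    [NormedSpace ℝ E] [CompleteSpace E] [NormedAddCommGroup F] [NormedSpace ℝ F]
    [SeminormedAddCommGroup W] {K : E →L[ℝ] F} (hK : IsCompactOperator K) {u : ℕ → E}
    (hu : Bornology.IsBounded (Set.range u)) {g : ℕ → W} (hg : Tendsto g atTop (𝓝 0))
    {c : ℝ} (hc : 0 < c) (hle : ∀ m n, c * ‖u m - u n‖ ≤ ‖g m‖ + ‖g n‖ + ‖K (u m) - K (u n)‖) :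
    ∃ φ : ℕ → ℕ, StrictMono φ ∧ ∃ w : E, Tendsto (u ∘ φ) atTop (𝓝 w) := by
  obtain ⟨φ, hφ, _, hKφ⟩ := hK.exists_tendsto_subseq_comp hu
  have hcauchy : CauchySeq (u ∘ φ) :=
    cauchySeq_of_mul_norm_sub_le hc hKφ.cauchySeq (hg.comp hφ.tendsto_atTop)
      fun m n => hle (φ m) (φ n)
  exact ⟨φ, hφ, cauchySeq_tendsto_of_complete hcauchy⟩

theorem stmt_9_general {H : Type*} [NormedAddCommGroup H] [InnerProductSpace ℝ H] [CompleteSpace H]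
    (V : Set H) (u₀ : H)
    (L : H → ℝ) (gradL : H → H)
    (B P Q : H → H →L[ℝ] H)
    (hGateaux : ∀ u ∈ V, ∀ v : H,
      Tendsto (fun t : ℝ => t⁻¹ • (gradL (u + t • v) - gradL u)) (𝓝[≠] (0 : ℝ)) (𝓝 (B u v)))
    (hdec : ∀ u ∈ V, B u = P u + Q u)
    (ε C₀ : ℝ) (hball : Metric.ball u₀ ε ⊆ V) (hC₀ : 0 < C₀)
    (hPpos : ∀ u ∈ Metric.ball u₀ ε, ∀ v : H, C₀ * ‖v‖ ^ 2 ≤ ⟪P u v, v⟫)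
    (hQcomp : IsCompactOperator ⇑(Q u₀))
    (ε' : ℝ) (hε'ε : ε' ≤ ε)
    (hQnear : ∀ u ∈ Metric.ball u₀ ε', ‖Q u - Q u₀‖ < C₀ / 2)
    (u : ℕ → H) (hu : ∀ n, u n ∈ Metric.ball u₀ ε')
    (hgrad : Tendsto (fun n => gradL (u n)) atTop (𝓝 0)) :
    ∃ φ : ℕ → ℕ, StrictMono φ ∧ ∃ w : H, Tendsto (u ∘ φ) atTop (𝓝 w) := by
  have hsub : Metric.ball u₀ ε' ⊆ Metric.ball u₀ ε := Metric.ball_subset_ball hε'ε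
  have hle : ∀ m n, C₀ / 2 * ‖u m - u n‖ ≤
      ‖gradL (u m)‖ + ‖gradL (u n)‖ + ‖Q u₀ (u m) - Q u₀ (u n)‖ := fun m n =>
    calc C₀ / 2 * ‖u m - u n‖ ≤ ‖gradL (u m) - gradL (u n) - Q u₀ (u m - u n)‖ :=
          (convex_ball u₀ ε').half_mul_norm_sub_le
            (fun w hw => hGateaux w (hball (hsub hw))) (fun w hw => hdec w (hball (hsub hw)))
            (fun w hw => hPpos w (hsub hw)) (fun w hw => (hQnear w hw).le) (hu n) (hu m)
      _ ≤ _ := by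
          rw [map_sub]
          exact (norm_sub_le _ _).trans (by gcongr; exact norm_sub_le _ _)
  exact exists_tendsto_subseq_of_mul_norm_sub_le hQcomp
    (Metric.isBounded_ball.subset (Set.range_subset_iff.2 hu)) hgrad (half_pos hC₀) hle

/-- Let `L ∈ C¹(V,ℝ)` on a neighborhood `V` of `u₀` in a real Hilbert space,
whose gradient has a Gâteaux derivative `B(u) = P(u) + Q(u)` at each `u ∈ V`, with
`(P(u)v,v) ≥ C₀‖v‖²` on `B(u₀,ε)` and `Q` continuous at `u₀` with `Q(u₀)` compact.
If `(uₙ) ⊂ B(u₀,ε')` (`ε' ≤ ε`) satisfies `∇L(uₙ) → 0` and `‖Q(u) − Q(u₀)‖ < C₀/2`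
on `B(u₀,ε')`, then `(uₙ)` has a strongly convergent subsequence. -/
theorem stmt_9 {H : Type*} [NormedAddCommGroup H] [InnerProductSpace ℝ H] [CompleteSpace H]
    (V : Set H) (hV : IsOpen V) (u₀ : H) (hu₀ : u₀ ∈ V)
    (L : H → ℝ) (gradL : H → H)
    (hL : ∀ u ∈ V, HasGradientAt L (gradL u) u) (hLcont : ContinuousOn gradL V)
    (B P Q : H → H →L[ℝ] H)
    (hBsa : ∀ u ∈ V, IsSelfAdjoint (B u))
    (hGateaux : ∀ u ∈ V, ∀ v : H,
      Tendsto (fun t : ℝ => t⁻¹ • (gradL (u + t • v) - gradL u)) (𝓝[≠] (0 : ℝ)) (𝓝 (B u v)))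
    (hdec : ∀ u ∈ V, B u = P u + Q u)
    (ε C₀ : ℝ) (hε : 0 < ε) (hball : Metric.ball u₀ ε ⊆ V) (hC₀ : 0 < C₀)
    (hPpos : ∀ u ∈ Metric.ball u₀ ε, ∀ v : H, C₀ * ‖v‖ ^ 2 ≤ ⟪P u v, v⟫)
    (hQcomp : IsCompactOperator ⇑(Q u₀)) (hQcont : ContinuousAt Q u₀)
    (ε' : ℝ) (hε' : 0 < ε') (hε'ε : ε' ≤ ε)
    (hQnear : ∀ u ∈ Metric.ball u₀ ε', ‖Q u - Q u₀‖ < C₀ / 2)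
    (u : ℕ → H) (hu : ∀ n, u n ∈ Metric.ball u₀ ε')
    (hgrad : Tendsto (fun n => gradL (u n)) atTop (𝓝 0)) :
    ∃ φ : ℕ → ℕ, StrictMono φ ∧ ∃ w : H, Tendsto (u ∘ φ) atTop (𝓝 w) :=
  stmt_9_general V u₀ L gradL B P Q hGateaux hdec ε C₀ hball hC₀ hPpos hQcomp ε' hε'ε hQnear u hu
    hgrad
end

section
/- Let H be a real Hilbert space with orthogonal decomposition H = H⁺ ⊕ H⁻ (both closed), a₀, a₁ > 0, and L a C¹ functional on a ball around 0 whose gradient is Gâteaux differentiable with derivative B(w) satisfying, for all w in the ball: (B(w)u, u) ≥ a₁‖u‖² for u ∈ H⁺, (B(w)u, u) ≤ −a₀‖u‖² for u ∈ H⁻, and |(B(w)u, v)| ≤ (min{a₀,a₁}/2)‖u‖·‖v‖ for u ∈ H⁺, v ∈ H⁻. If u, u' in the ball satisfy (I)∇L(u) = ∇L(u') with ‖(u−u')⁺‖ ≥ ‖(u−u')⁻‖, then u = u'; i.e., ∇L is injective on the ball under the stated dominance condition on components. More precisely: (∇L(u) − ∇L(u'), (u−u')⁺) ≥ (a₁/2)‖(u−u')⁺‖²,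 so ∇L(u) = ∇L(u') and ‖(u−u')⁺‖ ≥ ‖(u−u')⁻‖ force (u−u')⁺ = 0, and symmetrically (u−u')⁻ = 0. -/
open Filter Topology

local notation "⟪" x ", " y "⟫" => @inner ℝ _ _ x y

/-!
Write `h = u - u' = h⁺ + h⁻` with `h⁺ ∈ H⁺`, `h⁻ ∈ H⁻`. Applying the mean value theorem to
`t ↦ (∇L(u' + t h), h⁺)` gives a point `ξ` of the segment with `(B(ξ) h, h⁺) = 0`. Since `B(ξ)` is
self-adjoint, `(B(ξ) h, h⁺) = (B(ξ) h⁺, h⁺) + (B(ξ) h⁺, h⁻) ≥ a₁‖h⁺‖² - (a₁/2)‖h⁺‖‖h⁻‖`, which by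
`‖h⁻‖ ≤ ‖h⁺‖` is at least `(a₁/2)‖h⁺‖²`. Hence `h⁺ = 0`, and then `h⁻ = 0` as well.
-/

section GateauxMeanValue

variable {E F : Type*} [NormedAddCommGroup E] [NormedSpace ℝ E]
  [NormedAddCommGroup F] [InnerProductSpace ℝ F]

theorem hasDerivAt_comp_add_smul_of_tendsto_s17 {f : E → F} {x v : E} {y : F} {t : ℝ}
    (hf : Tendsto (fun τ : ℝ => τ⁻¹ • (f (x + t • v + τ • v) - f (x + t • v)))
      (𝓝[≠] 0) (𝓝 y)) :
    HasDerivAt (fun s : ℝ => f (x + s • v)) y t := by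
  rw [hasDerivAt_iff_tendsto_slope_zero]
  simpa only [add_smul, add_assoc] using hf

theorem Convex.exists_inner_gateaux_eq_inner_sub {s : Set E} (hs : Convex ℝ s) {f : E → F}
    {B : E → E →L[ℝ] F}
    (hf : ∀ w ∈ s, ∀ v : E,
      Tendsto (fun t : ℝ => t⁻¹ • (f (w + t • v) - f w)) (𝓝[≠] 0) (𝓝 (B w v)))
    {x y : E} (hx : x ∈ s) (hy : y ∈ s) (z : F) :
    ∃ ξ ∈ s, ⟪B ξ (y - x), z⟫ = ⟪f y - f x, z⟫ := by
  have hseg : ∀ t ∈ Set.Icc (0 : ℝ) 1, x + t • (y - x) ∈ s := fun t ht =>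
    hs.add_smul_sub_mem hx hy ht
  have hderiv : ∀ t ∈ Set.Icc (0 : ℝ) 1, HasDerivAt (fun s : ℝ => ⟪f (x + s • (y - x)), z⟫)
      ⟪B (x + t • (y - x)) (y - x), z⟫ t := fun t ht =>
    (hasDerivAt_comp_add_smul_of_tendsto_s17 (hf _ (hseg t ht) _)).inner ℝ (hasDerivAt_const t z)
      |>.congr_deriv (by simp)
  obtain ⟨c, hc, hceq⟩ := exists_hasDerivAt_eq_slope _ _ zero_lt_one
    (fun t ht => (hderiv t ht).continuousAt.continuousWithinAt)
    (fun t ht => hderiv t (Set.mem_Icc_of_Ioo ht))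
  refine ⟨_, hseg c (Set.mem_Icc_of_Ioo hc), ?_⟩
  rw [hceq]
  simp [inner_sub_left]

end GateauxMeanValue

section SplitCoercivity

variable {H : Type*} [NormedAddCommGroup H] [InnerProductSpace ℝ H] [CompleteSpace H]

theorem half_mul_norm_sq_le_inner_add {T : H →L[ℝ] H} (hT : IsSelfAdjoint T) {a c : ℝ}
    (ha : 0 ≤ a) (hca : c ≤ a) {p m : H} (hpos : a * ‖p‖ ^ 2 ≤ ⟪T p, p⟫)
    (hmix : |⟪T p, m⟫| ≤ c / 2 * (‖p‖ * ‖m‖)) (hmp : ‖m‖ ≤ ‖p‖) :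
    a / 2 * ‖p‖ ^ 2 ≤ ⟪T (p + m), p⟫ := by
  have hsymm : ⟪T m, p⟫ = ⟪T p, m⟫ := (hT.isSymmetric m p).trans (real_inner_comm _ _)
  have hcross : c * (‖p‖ * ‖m‖) ≤ a * ‖p‖ ^ 2 := by
    rcases le_total c 0 with hc | hc
    · nlinarith [mul_nonneg (norm_nonneg p) (norm_nonneg m), sq_nonneg ‖p‖]
    · nlinarith [mul_le_mul_of_nonneg_left hmp (norm_nonneg p), norm_nonneg p]
  rw [map_add, inner_add_left, hsymm]
  linarith [neg_abs_le ⟪T p, m⟫]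

theorem Submodule.eq_zero_of_inner_starProjection_eq_zero (K : Submodule ℝ H)
    [K.HasOrthogonalProjection] {T : H →L[ℝ] H} (hT : IsSelfAdjoint T) {a c : ℝ}
    (ha : 0 < a) (hca : c ≤ a) (hpos : ∀ u ∈ K, a * ‖u‖ ^ 2 ≤ ⟪T u, u⟫)
    (hmix : ∀ u ∈ K, ∀ v ∈ Kᗮ, |⟪T u, v⟫| ≤ c / 2 * (‖u‖ * ‖v‖)) {h : H}
    (hdom : ‖h - K.starProjection h‖ ≤ ‖K.starProjection h‖)
    (hzero : ⟪T h, K.starProjection h⟫ = 0) : h = 0 := by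
  set p := K.starProjection h
  have hpK : p ∈ K := K.starProjection_apply_mem h
  have hmK : h - p ∈ Kᗮ := K.sub_starProjection_mem_orthogonal h
  have hcoer := half_mul_norm_sq_le_inner_add hT ha.le hca (hpos p hpK) (hmix p hpK _ hmK) hdom
  rw [add_sub_cancel, hzero] at hcoer
  have hp : ‖p‖ = 0 := by
    have : ‖p‖ ^ 2 ≤ 0 := nonpos_of_mul_nonpos_right hcoer (half_pos ha)
    exact pow_eq_zero_iff two_ne_zero |>.mp (le_antisymm this (sq_nonneg _))
  rw [hp, norm_le_zero_iff, sub_eq_zero] at hdom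
  rwa [hdom, ← norm_eq_zero]

end SplitCoercivity

theorem stmt_17_general {H : Type*} [NormedAddCommGroup H] [InnerProductSpace ℝ H] [CompleteSpace H]
    (Hp : Submodule ℝ H) [Hp.HasOrthogonalProjection]
    (a₀ a₁ r : ℝ) (ha₁ : 0 < a₁)
    (L : H → ℝ) (gradL : H → H) (B : H → H →L[ℝ] H)
    (hBsa : ∀ w ∈ Metric.ball (0 : H) r, IsSelfAdjoint (B w))
    (hGateaux : ∀ w ∈ Metric.ball (0 : H) r, ∀ v : H,
      Tendsto (fun t : ℝ => t⁻¹ • (gradL (w + t • v) - gradL w)) (𝓝[≠] (0 : ℝ)) (𝓝 (B w v)))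
    (hpos : ∀ w ∈ Metric.ball (0 : H) r, ∀ u ∈ Hp, a₁ * ‖u‖ ^ 2 ≤ ⟪B w u, u⟫)
    (hmix : ∀ w ∈ Metric.ball (0 : H) r, ∀ u ∈ Hp, ∀ v ∈ Hpᗮ,
      |⟪B w u, v⟫| ≤ min a₀ a₁ / 2 * (‖u‖ * ‖v‖)) :
    ∀ u ∈ Metric.ball (0 : H) r, ∀ u' ∈ Metric.ball (0 : H) r,
      gradL u = gradL u' →
      ‖(u - u') - (Hp.orthogonalProjectionOnto (u - u') : H)‖ ≤
        ‖(Hp.orthogonalProjectionOnto (u - u') : H)‖ →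
      u = u' := by
  intro u hu u' hu' hgrad hdom
  obtain ⟨ξ, hξ, hmvt⟩ := (convex_ball (0 : H) r).exists_inner_gateaux_eq_inner_sub hGateaux hu' hu
    (Hp.starProjection (u - u'))
  rw [hgrad, sub_self, inner_zero_left] at hmvt
  exact sub_eq_zero.mp <| Hp.eq_zero_of_inner_starProjection_eq_zero (hBsa ξ hξ) ha₁
    (min_le_right a₀ a₁) (hpos ξ hξ) (hmix ξ hξ) hdom hmvt

/-- Let `H = H⁺ ⊕ H⁻` be an orthogonal decomposition of a real Hilbert space,
`a₀, a₁ > 0`, and `L` a `C¹` functional on a ball around 0 whose gradient has Gâteaux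
derivative `B(w)` satisfying `(B(w)u,u) ≥ a₁‖u‖²` on `H⁺`, `(B(w)u,u) ≤ −a₀‖u‖²` on `H⁻`,
and `|(B(w)u,v)| ≤ (min{a₀,a₁}/2)‖u‖‖v‖` for `u ∈ H⁺`, `v ∈ H⁻`. If `u, u'` in the ball
satisfy `∇L(u) = ∇L(u')` and `‖(u−u')⁻‖ ≤ ‖(u−u')⁺‖`, then `u = u'`. -/
theorem stmt_17 {H : Type*} [NormedAddCommGroup H] [InnerProductSpace ℝ H] [CompleteSpace H]
    (Hp : Submodule ℝ H) [Hp.HasOrthogonalProjection]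
    (a₀ a₁ r : ℝ) (ha₀ : 0 < a₀) (ha₁ : 0 < a₁) (hr : 0 < r)
    (L : H → ℝ) (gradL : H → H) (B : H → H →L[ℝ] H)
    (hL : ∀ w ∈ Metric.ball (0 : H) r, HasGradientAt L (gradL w) w)
    (hBsa : ∀ w ∈ Metric.ball (0 : H) r, IsSelfAdjoint (B w))
    (hGateaux : ∀ w ∈ Metric.ball (0 : H) r, ∀ v : H,
      Tendsto (fun t : ℝ => t⁻¹ • (gradL (w + t • v) - gradL w)) (𝓝[≠] (0 : ℝ)) (𝓝 (B w v)))
    (hpos : ∀ w ∈ Metric.ball (0 : H) r, ∀ u ∈ Hp, a₁ * ‖u‖ ^ 2 ≤ ⟪B w u, u⟫)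
    (hneg : ∀ w ∈ Metric.ball (0 : H) r, ∀ u ∈ Hpᗮ, ⟪B w u, u⟫ ≤ -(a₀ * ‖u‖ ^ 2))
    (hmix : ∀ w ∈ Metric.ball (0 : H) r, ∀ u ∈ Hp, ∀ v ∈ Hpᗮ,
      |⟪B w u, v⟫| ≤ min a₀ a₁ / 2 * (‖u‖ * ‖v‖)) :
    ∀ u ∈ Metric.ball (0 : H) r, ∀ u' ∈ Metric.ball (0 : H) r,
      gradL u = gradL u' →
      ‖(u - u') - (Hp.orthogonalProjectionOnto (u - u') : H)‖ ≤
        ‖(Hp.orthogonalProjectionOnto (u - u') : H)‖ →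
      u = u' :=
  stmt_17_general Hp a₀ a₁ r ha₁ L gradL B hBsa hGateaux hpos hmix
end
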